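/- arXiv:2602.06253 — 3 statements merged into one kernel-verified Lean document; each statement's English description precedes it below -/
import Mathlib

section
/- In second-order intuitionistic tense logic IKt2 (with diamonds), the formula ◆A ↔ ∀X (■(A → □X) → X) is provable, where X does not occur free in A. -/
namespace SOTenseD

/-- Formulas of second-order tense logic with *native* diamonds ◊, ◆. -/
inductive Fm : Type where
  | pr : ℕ → Fm
  | var : ℕ → Fm
  | imp : Fm → Fm → Fm
  | box : Fm → Fm
  | bbox : Fm → Fm
  | dia : Fm → Fm
  | bdia : Fm → Fm
  | all : Fm → Fm

namespace Fm

/-- Shift de Bruijn variables ≥ c by one. -/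
def lift (c : ℕ) : Fm → Fm
  | pr p => pr p
  | var n => if n < c then var n else var (n + 1)
  | imp A B => imp (A.lift c) (B.lift c)
  | box A => box (A.lift c)
  | bbox A => bbox (A.lift c)
  | dia A => dia (A.lift c)
  | bdia A => bdia (A.lift c)
  | all A => all (A.lift (c + 1))

/-- Substitute C for de Bruijn variable k. -/
def subst : Fm → ℕ → Fm → Fm
  | pr p, _, _ => pr p
  | var n, k, C => if n < k then var n else if n = k then C else var (n - 1)
  | imp A B, k, C => imp (A.subst k C) (B.subst k C)
  | box A, k, C => box (A.subst k C)
  | bbox A, k, C => bbox (A.subst k C)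
  | dia A, k, C => dia (A.subst k C)
  | bdia A, k, C => bdia (A.subst k C)
  | all A, k, C => all (A.subst (k + 1) (C.lift 0))

/-- A[C/X]: instantiate the outermost bound variable of the body A with C. -/
def inst (A C : Fm) : Fm := A.subst 0 C

/-- The propositional symbol P occurs in the formula. -/
def occursPr (P : ℕ) : Fm → Prop
  | pr p => p = P
  | var _ => False
  | imp A B => A.occursPr P ∨ B.occursPr P
  | box A => A.occursPr P
  | bbox A => A.occursPr P
  | dia A => A.occursPr P
  | bdia A => A.occursPr P
  | all A => A.occursPr P

/-- A ∧ B := ∀X((A → B → X) → X) -/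
def conj (A B : Fm) : Fm :=
  all (imp (imp (A.lift 0) (imp (B.lift 0) (var 0))) (var 0))
/-- A ↔ B := (A → B) ∧ (B → A) -/
def iff (A B : Fm) : Fm := conj (imp A B) (imp B A)

/-- ∀X(□(A → ■X) → X), where X does not occur free in A
(guaranteed by the de Bruijn lift). -/
def soDia (A : Fm) : Fm :=
  all (imp (box (imp (A.lift 0) (bbox (var 0)))) (var 0))
/-- ∀X(■(A → □X) → X), where X does not occur free in A. -/
def soBdia (A : Fm) : Fm :=
  all (imp (bbox (imp (A.lift 0) (box (var 0)))) (var 0))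

end Fm

/-- IKt2(◊,◆): second-order intuitionistic tense logic with native diamonds:
IPL2 (K, S, ∀-distribution, vacuous quantification, full comprehension,
modus ponens, generalization), normality of all four modalities,
□/■-necessitation, and the adjunction axioms ◆□A→A, A→□◆A, ◊■A→A, A→■◊A. -/
inductive IKtD : Fm → Prop where
  | axK (A B : Fm) : IKtD (A.imp (B.imp A))
  | axS (A B C : Fm) :
      IKtD ((A.imp (B.imp C)).imp ((A.imp B).imp (A.imp C)))
  | axAllFun (A B : Fm) :
      IKtD ((Fm.all (A.imp B)).imp ((Fm.all A).imp (Fm.all B)))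
  | axV (A : Fm) : IKtD (A.imp (Fm.all (A.lift 0)))
  | axC (A C : Fm) : IKtD ((Fm.all A).imp (A.inst C))
  | mp {A B : Fm} : IKtD (A.imp B) → IKtD A → IKtD B
  | gen {A : Fm} {P : ℕ} :
      IKtD (A.inst (Fm.pr P)) → ¬ (Fm.all A).occursPr P → IKtD (Fm.all A)
  | axBoxFun (A B : Fm) :
      IKtD ((Fm.box (A.imp B)).imp ((Fm.box A).imp (Fm.box B)))
  | axDiaFun (A B : Fm) :
      IKtD ((Fm.box (A.imp B)).imp ((Fm.dia A).imp (Fm.dia B)))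
  | axBboxFun (A B : Fm) :
      IKtD ((Fm.bbox (A.imp B)).imp ((Fm.bbox A).imp (Fm.bbox B)))
  | axBdiaFun (A B : Fm) :
      IKtD ((Fm.bbox (A.imp B)).imp ((Fm.bdia A).imp (Fm.bdia B)))
  | necBox {A : Fm} : IKtD A → IKtD (Fm.box A)
  | necBbox {A : Fm} : IKtD A → IKtD (Fm.bbox A)
  | axTenseBdiaBox (A : Fm) : IKtD ((Fm.bdia (Fm.box A)).imp A)
  | axTenseBoxBdia (A : Fm) : IKtD (A.imp (Fm.box (Fm.bdia A)))
  | axTenseDiaBbox (A : Fm) : IKtD ((Fm.dia (Fm.bbox A)).imp A)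
  | axTenseBboxDia (A : Fm) : IKtD (A.imp (Fm.bbox (Fm.dia A)))

namespace Fm

@[simp] lemma subst_lift (A : Fm) : ∀ (c : ℕ) (C : Fm), (A.lift c).subst c C = A := by
  induction A with
  | pr p => intro c C; simp [lift, subst]
  | var n => intro c C
             by_cases h : n < c
             · simp [lift, subst, h]
             · have h1 : ¬ n + 1 < c := by omega
               have h2 : n + 1 ≠ c := by omega
               simp [lift, subst, h, h1, h2]
  | imp A B ihA ihB => intro c C; simp [lift, subst, ihA, ihB]
  | box A ih => intro c C; simp [lift, subst, ih]
  | bbox A ih => intro c C; simp [lift, subst, ih]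
  | dia A ih => intro c C; simp [lift, subst, ih]
  | bdia A ih => intro c C; simp [lift, subst, ih]
  | all A ih => intro c C; simp [lift, subst, ih]

@[simp] lemma occursPr_lift (P : ℕ) (A : Fm) : ∀ c, (A.lift c).occursPr P ↔ A.occursPr P := by
  induction A with
  | pr p => intro c; simp [lift, occursPr]
  | var n => intro c
             by_cases h : n < c <;> simp [lift, occursPr, h]
  | imp A B ihA ihB => intro c; simp [lift, occursPr, ihA, ihB]
  | box A ih => intro c; simp [lift, occursPr, ih]
  | bbox A ih => intro c; simp [lift, occursPr, ih]
  | dia A ih => intro c; simp [lift, occursPr, ih]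
  | bdia A ih => intro c; simp [lift, occursPr, ih]
  | all A ih => intro c; simp [lift, occursPr, ih]

/-- Maximum propositional symbol occurring (0 if none). -/
def maxPr : Fm → ℕ
  | pr p => p
  | var _ => 0
  | imp A B => max A.maxPr B.maxPr
  | box A => A.maxPr
  | bbox A => A.maxPr
  | dia A => A.maxPr
  | bdia A => A.maxPr
  | all A => A.maxPr

lemma not_occursPr_of_gt {P : ℕ} {A : Fm} (h : A.maxPr < P) : ¬ A.occursPr P := by
  induction A with
  | pr p => simp [maxPr] at h; simp [occursPr]; omega
  | var n => simp [occursPr]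
  | imp A B ihA ihB =>
      simp [maxPr] at h
      simp [occursPr]
      exact ⟨ihA h.1, ihB h.2⟩
  | box A ih => exact ih h
  | bbox A ih => exact ih h
  | dia A ih => exact ih h
  | bdia A ih => exact ih h
  | all A ih => exact ih h

end Fm

namespace IKtD

open Fm

/-- Identity: ⊢ A → A. -/
lemma impId (A : Fm) : IKtD (A.imp A) :=
  mp (mp (axS A (A.imp A) A) (axK A (A.imp A))) (axK A A)

/-- Composition: from ⊢ A → B and ⊢ B → C derive ⊢ A → C. -/
lemma comp {A B C : Fm} (hAB : IKtD (A.imp B)) (hBC : IKtD (B.imp C)) :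
    IKtD (A.imp C) :=
  mp (mp (axS A B C) (mp (axK (B.imp C) A) hBC)) hAB

/-- Left monotonicity: from ⊢ B → C derive ⊢ (A → B) → (A → C). -/
lemma impMono {B C : Fm} (A : Fm) (h : IKtD (B.imp C)) :
    IKtD ((A.imp B).imp (A.imp C)) :=
  mp (axS A B C) (mp (axK (B.imp C) A) h)

/-- Swap: from ⊢ A → (B → C) derive ⊢ B → (A → C). -/
lemma swap {A B C : Fm} (h : IKtD (A.imp (B.imp C))) :
    IKtD (B.imp (A.imp C)) :=
  comp (axK B A) (mp (axS A B C) h)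

/-- From ⊢ A derive ⊢ (A → C) → C. -/
lemma applyHyp {A : Fm} (C : Fm) (h : IKtD A) :
    IKtD ((A.imp C).imp C) :=
  mp (swap (impId (A.imp C))) h

/-- Conjunction introduction, provided P is fresh. -/
lemma conjIntro {A B : Fm} (hA : IKtD A) (hB : IKtD B) :
    IKtD (A.conj B) := by
  set P : ℕ := max A.maxPr B.maxPr + 1 with hP
  have hfA : ¬ A.occursPr P := not_occursPr_of_gt (by omega)
  have hfB : ¬ B.occursPr P := not_occursPr_of_gt (by omega)
  apply gen (P := P)
  · show IKtD ((Fm.imp (Fm.imp (A.lift 0) (Fm.imp (B.lift 0) (var 0))) (var 0)).subst 0 (pr P))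
    simp only [subst, subst_lift]
    norm_num
    exact comp (applyHyp (B.imp (pr P)) hA) (applyHyp (pr P) hB)
  · simp [occursPr, hfA, hfB]

/-- Direction 1: ⊢ ◆A → soBdia A. -/
lemma bdia_to_soBdia (A : Fm) : IKtD ((Fm.bdia A).imp (Fm.soBdia A)) := by
  set P : ℕ := A.maxPr + 1 with hP
  have hfA : ¬ A.occursPr P := not_occursPr_of_gt (by omega)
  -- body of the generalized formula
  set B0 : Fm := Fm.imp (Fm.bdia (A.lift 0))
      (Fm.imp (Fm.bbox (Fm.imp (A.lift 0) (Fm.box (var 0)))) (var 0)) with hB0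
  have hAll : IKtD (Fm.all B0) := by
    apply gen (P := P)
    · show IKtD (B0.subst 0 (pr P))
      simp only [hB0, subst, subst_lift]
      norm_num
      -- goal: ⊢ ◆A → (■(A → □P) → P)
      have h1 : IKtD ((Fm.bbox (A.imp (Fm.box (pr P)))).imp
          ((Fm.bdia A).imp (Fm.bdia (Fm.box (pr P))))) :=
        axBdiaFun A (Fm.box (pr P))
      have h2 : IKtD ((Fm.bdia (Fm.box (pr P))).imp (pr P)) := axTenseBdiaBox (pr P)
      exact swap (comp h1 (impMono (Fm.bdia A) h2))
    · simp [hB0, occursPr, hfA]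
  have hV : IKtD ((Fm.bdia A).imp (Fm.all ((Fm.bdia A).lift 0))) := axV (Fm.bdia A)
  have hDist : IKtD ((Fm.all B0).imp
      ((Fm.all (Fm.bdia (A.lift 0))).imp
        (Fm.all (Fm.imp (Fm.bbox (Fm.imp (A.lift 0) (Fm.box (var 0)))) (var 0))))) :=
    axAllFun (Fm.bdia (A.lift 0)) (Fm.imp (Fm.bbox (Fm.imp (A.lift 0) (Fm.box (var 0)))) (var 0))
  have hV' : IKtD ((Fm.bdia A).imp (Fm.all (Fm.bdia (A.lift 0)))) := by
    simpa [lift] using hV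
  exact comp hV' (mp hDist hAll)

/-- Direction 2: ⊢ soBdia A → ◆A. -/
lemma soBdia_to_bdia (A : Fm) : IKtD ((Fm.soBdia A).imp (Fm.bdia A)) := by
  have hC : IKtD ((Fm.soBdia A).imp
      ((Fm.imp (Fm.bbox (Fm.imp (A.lift 0) (Fm.box (var 0)))) (var 0)).inst (Fm.bdia A))) :=
    axC _ (Fm.bdia A)
  have hC' : IKtD ((Fm.soBdia A).imp
      ((Fm.bbox (A.imp (Fm.box (Fm.bdia A)))).imp (Fm.bdia A))) := by
    simpa [inst, subst, subst_lift] using hC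
  have hPrem : IKtD (Fm.bbox (A.imp (Fm.box (Fm.bdia A)))) :=
    necBbox (axTenseBoxBdia A)
  exact mp (swap hC') hPrem

end IKtD

/-- In IKt2(◊,◆), the formula ◆A ↔ ∀X(■(A → □X) → X) is provable,
where X does not occur free in A. -/
theorem bdia_iff_soBdia (A : Fm) : IKtD ((Fm.bdia A).iff (Fm.soBdia A)) :=
  IKtD.conjIntro (IKtD.bdia_to_soBdia A) (IKtD.soBdia_to_bdia A)

end SOTenseD
end

section
/- IKt2 proves ◊(A∨B) → ◊A ∨ ◊B, where ∨ is the second-order encoding A∨B := ∀X((A→X)→(B→X)→X) and ◊A := ∀X(□(A→■X)→X). -/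
namespace SOTense

/-- Formulas of second-order tense logic: propositional symbols, de Bruijn
second-order variables, implication, □, ■, and second-order ∀. -/
inductive Fm : Type where
  | pr : ℕ → Fm
  | var : ℕ → Fm
  | imp : Fm → Fm → Fm
  | box : Fm → Fm
  | bbox : Fm → Fm
  | all : Fm → Fm

namespace Fm

/-- Shift de Bruijn variables ≥ c by one. -/
def lift (c : ℕ) : Fm → Fm
  | pr p => pr p
  | var n => if n < c then var n else var (n + 1)
  | imp A B => imp (A.lift c) (B.lift c)
  | box A => box (A.lift c)
  | bbox A => bbox (A.lift c)
  | all A => all (A.lift (c + 1))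

/-- Substitute C for de Bruijn variable k. -/
def subst : Fm → ℕ → Fm → Fm
  | pr p, _, _ => pr p
  | var n, k, C => if n < k then var n else if n = k then C else var (n - 1)
  | imp A B, k, C => imp (A.subst k C) (B.subst k C)
  | box A, k, C => box (A.subst k C)
  | bbox A, k, C => bbox (A.subst k C)
  | all A, k, C => all (A.subst (k + 1) (C.lift 0))

/-- A[C/X]: instantiate the outermost bound variable of the body A with C. -/
def inst (A C : Fm) : Fm := A.subst 0 C

/-- The propositional symbol P occurs in the formula. -/
def occursPr (P : ℕ) : Fm → Prop
  | pr p => p = P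
  | var _ => False
  | imp A B => A.occursPr P ∨ B.occursPr P
  | box A => A.occursPr P
  | bbox A => A.occursPr P
  | all A => A.occursPr P

/-- ⊥ := ∀X X -/
def bot : Fm := all (var 0)
/-- ¬A := A → ⊥ -/
def neg (A : Fm) : Fm := imp A bot
/-- A ∧ B := ∀X((A → B → X) → X) -/
def conj (A B : Fm) : Fm :=
  all (imp (imp (A.lift 0) (imp (B.lift 0) (var 0))) (var 0))
/-- A ∨ B := ∀X((A → X) → (B → X) → X) -/
def disj (A B : Fm) : Fm :=
  all (imp (imp (A.lift 0) (var 0)) (imp (imp (B.lift 0) (var 0)) (var 0)))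
/-- A ↔ B := (A → B) ∧ (B → A) -/
def iff (A B : Fm) : Fm := conj (imp A B) (imp B A)
/-- ◊A := ∀X(□(A → ■X) → X) -/
def dia (A : Fm) : Fm :=
  all (imp (box (imp (A.lift 0) (bbox (var 0)))) (var 0))
/-- ◆A := ∀X(■(A → □X) → X) -/
def bdia (A : Fm) : Fm :=
  all (imp (bbox (imp (A.lift 0) (box (var 0)))) (var 0))

end Fm

/-- Hilbert-style provability for second-order tense logic, with defined ◊/◆.
`Prov false` is intuitionistic `IKt2`; `Prov true` is classical `Kt2`
(adding double negation elimination). -/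
inductive Prov : Bool → Fm → Prop where
  | axK (cl : Bool) (A B : Fm) : Prov cl (A.imp (B.imp A))
  | axS (cl : Bool) (A B C : Fm) :
      Prov cl ((A.imp (B.imp C)).imp ((A.imp B).imp (A.imp C)))
  | axAllFun (cl : Bool) (A B : Fm) :
      Prov cl ((Fm.all (A.imp B)).imp ((Fm.all A).imp (Fm.all B)))
  | axV (cl : Bool) (A : Fm) : Prov cl (A.imp (Fm.all (A.lift 0)))
  | axC (cl : Bool) (A C : Fm) : Prov cl ((Fm.all A).imp (A.inst C))
  | mp {cl : Bool} {A B : Fm} : Prov cl (A.imp B) → Prov cl A → Prov cl B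
  | gen {cl : Bool} {A : Fm} {P : ℕ} :
      Prov cl (A.inst (Fm.pr P)) → ¬ (Fm.all A).occursPr P → Prov cl (Fm.all A)
  | axBoxFun (cl : Bool) (A B : Fm) :
      Prov cl ((Fm.box (A.imp B)).imp ((Fm.box A).imp (Fm.box B)))
  | axBboxFun (cl : Bool) (A B : Fm) :
      Prov cl ((Fm.bbox (A.imp B)).imp ((Fm.bbox A).imp (Fm.bbox B)))
  | necBox {cl : Bool} {A : Fm} : Prov cl A → Prov cl (Fm.box A)
  | necBbox {cl : Bool} {A : Fm} : Prov cl A → Prov cl (Fm.bbox A)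
  | axTenseBdiaBox (cl : Bool) (A : Fm) : Prov cl ((Fm.bdia (Fm.box A)).imp A)
  | axTenseBoxBdia (cl : Bool) (A : Fm) : Prov cl (A.imp (Fm.box (Fm.bdia A)))
  | axTenseDiaBbox (cl : Bool) (A : Fm) : Prov cl ((Fm.dia (Fm.bbox A)).imp A)
  | axTenseBboxDia (cl : Bool) (A : Fm) : Prov cl (A.imp (Fm.bbox (Fm.dia A)))
  | axDNE (A : Fm) : Prov true (A.neg.neg.imp A)

/-- Second-order intuitionistic tense logic. -/
def IKt2 (A : Fm) : Prop := Prov false A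
/-- Second-order classical tense logic. -/
def Kt2 (A : Fm) : Prop := Prov true A

/-! ### Auxiliary syntactic lemmas -/

theorem subst_lift (A : Fm) : ∀ k C, (A.lift k).subst k C = A := by
  induction A with
  | pr p => intro k C; simp [Fm.lift, Fm.subst]
  | var n =>
      intro k C
      by_cases h : n < k
      · simp [Fm.lift, Fm.subst, h]
      · simp only [Fm.lift, if_neg h, Fm.subst]
        have h1 : ¬ n + 1 < k := by omega
        have h2 : ¬ n + 1 = k := by omega
        simp [h1, h2]
  | imp A B ihA ihB => intro k C; simp [Fm.lift, Fm.subst, ihA, ihB]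
  | box A ih => intro k C; simp [Fm.lift, Fm.subst, ih]
  | bbox A ih => intro k C; simp [Fm.lift, Fm.subst, ih]
  | all A ih => intro k C; simp [Fm.lift, Fm.subst, ih]

/-- A strict upper bound on the propositional symbols occurring in a formula. -/
def maxPr : Fm → ℕ
  | .pr p => p + 1
  | .var _ => 0
  | .imp A B => max (maxPr A) (maxPr B)
  | .box A => maxPr A
  | .bbox A => maxPr A
  | .all A => maxPr A

theorem lt_maxPr_of_occurs {P : ℕ} {A : Fm} (h : A.occursPr P) : P < maxPr A := by
  induction A with
  | pr p => simp [Fm.occursPr] at h; simp [maxPr]; omega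
  | var n => simp [Fm.occursPr] at h
  | imp A B ihA ihB =>
      simp only [maxPr]
      rcases h with h | h
      · exact lt_of_lt_of_le (ihA h) (le_max_left _ _)
      · exact lt_of_lt_of_le (ihB h) (le_max_right _ _)
  | box A ih => simpa only [maxPr] using ih h
  | bbox A ih => simpa only [maxPr] using ih h
  | all A ih => simpa only [maxPr] using ih h

theorem fresh_not_occurs (A : Fm) : ¬ A.occursPr (maxPr A) :=
  fun h => lt_irrefl _ (lt_maxPr_of_occurs h)

/-! ### Derived Hilbert rules -/

namespace Prov

theorem impId {cl : Bool} (A : Fm) : Prov cl (A.imp A) :=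
  .mp (.mp (.axS cl A (A.imp A) A) (.axK cl A (A.imp A))) (.axK cl A A)

theorem trans' {cl : Bool} {A B C : Fm} (h1 : Prov cl (A.imp B))
    (h2 : Prov cl (B.imp C)) : Prov cl (A.imp C) :=
  .mp (.mp (.axS cl A B C) (.mp (.axK cl (B.imp C) A) h2)) h1

theorem mpc {cl : Bool} {A B C : Fm} (h : Prov cl (A.imp (B.imp C)))
    (hB : Prov cl B) : Prov cl (A.imp C) :=
  .mp (.mp (.axS cl A B C) h) (.mp (.axK cl B A) hB)

theorem mono {cl : Bool} {B C : Fm} (A : Fm) (h : Prov cl (B.imp C)) :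
    Prov cl ((A.imp B).imp (A.imp C)) :=
  .mp (.axS cl A B C) (.mp (.axK cl (B.imp C) A) h)

theorem swap' {cl : Bool} {A B C : Fm} (h : Prov cl (A.imp (B.imp C))) :
    Prov cl (B.imp (A.imp C)) :=
  trans' (.axK cl B A) (.mp (.axS cl A B C) h)

/-- ⊢ A → (A→B) → B -/
theorem appSelf {cl : Bool} (A B : Fm) : Prov cl (A.imp ((A.imp B).imp B)) :=
  swap' (impId (A.imp B))

theorem bboxMono {cl : Bool} {A B : Fm} (h : Prov cl (A.imp B)) :
    Prov cl ((Fm.bbox A).imp (Fm.bbox B)) :=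
  .mp (.axBboxFun cl A B) (.necBbox h)

end Prov

/-- Instantiation of the body of a disjunction. -/
theorem inst_disjBody (C D Q : Fm) :
    (Fm.imp (.imp (C.lift 0) (.var 0)) (.imp (.imp (D.lift 0) (.var 0)) (.var 0))).inst Q
      = Fm.imp (C.imp Q) ((D.imp Q).imp Q) := by
  simp [Fm.inst, Fm.subst, subst_lift]

/-- Instantiation of the body of a ◊ formula. -/
theorem inst_diaBody (C Q : Fm) :
    (Fm.imp (.box (.imp (C.lift 0) (.bbox (.var 0)))) (.var 0)).inst Q
      = Fm.imp (.box (C.imp (.bbox Q))) Q := by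
  simp [Fm.inst, Fm.subst, subst_lift]

/-- ⊢ C → C ∨ D -/
theorem disj_inl (C D : Fm) {cl : Bool} : Prov cl (C.imp (C.disj D)) := by
  set body : Fm := .imp (.imp (C.lift 0) (.var 0)) (.imp (.imp (D.lift 0) (.var 0)) (.var 0))
    with hbody
  set P : ℕ := maxPr (Fm.all ((C.lift 0).imp body)) with hP
  have hinst : ((C.lift 0).imp body).inst (Fm.pr P)
      = C.imp ((C.imp (.pr P)).imp ((D.imp (.pr P)).imp (.pr P))) := by
    simp [hbody, Fm.inst, Fm.subst, subst_lift]
  -- propositional: C → (C→P) → (D→P) → P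
  have hprop : Prov cl (C.imp ((C.imp (.pr P)).imp ((D.imp (.pr P)).imp (.pr P)))) := by
    have h1 : Prov cl (C.imp ((C.imp (.pr P)).imp (.pr P))) := Prov.appSelf C (.pr P)
    exact Prov.trans' h1 (Prov.mono _ (Prov.axK cl (.pr P) (D.imp (.pr P))))
  have hgen : Prov cl (Fm.all ((C.lift 0).imp body)) := by
    refine Prov.gen ?_ (fresh_not_occurs _)
    rw [hinst]; exact hprop
  have hfun : Prov cl ((Fm.all ((C.lift 0).imp body)).imp
      ((Fm.all (C.lift 0)).imp (Fm.all body))) := Prov.axAllFun cl _ _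
  exact Prov.trans' (Prov.axV cl C) (Prov.mp hfun hgen)

/-- ⊢ D → C ∨ D -/
theorem disj_inr (C D : Fm) {cl : Bool} : Prov cl (D.imp (C.disj D)) := by
  set body : Fm := .imp (.imp (C.lift 0) (.var 0)) (.imp (.imp (D.lift 0) (.var 0)) (.var 0))
    with hbody
  set P : ℕ := maxPr (Fm.all ((D.lift 0).imp body)) with hP
  have hinst : ((D.lift 0).imp body).inst (Fm.pr P)
      = D.imp ((C.imp (.pr P)).imp ((D.imp (.pr P)).imp (.pr P))) := by
    simp [hbody, Fm.inst, Fm.subst, subst_lift]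
  have hprop : Prov cl (D.imp ((C.imp (.pr P)).imp ((D.imp (.pr P)).imp (.pr P)))) := by
    have h1 : Prov cl (D.imp ((D.imp (.pr P)).imp (.pr P))) := Prov.appSelf D (.pr P)
    exact Prov.trans' h1 (Prov.axK cl _ (C.imp (.pr P)))
  have hgen : Prov cl (Fm.all ((D.lift 0).imp body)) := by
    refine Prov.gen ?_ (fresh_not_occurs _)
    rw [hinst]; exact hprop
  have hfun : Prov cl ((Fm.all ((D.lift 0).imp body)).imp
      ((Fm.all (D.lift 0)).imp (Fm.all body))) := Prov.axAllFun cl _ _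
  exact Prov.trans' (Prov.axV cl D) (Prov.mp hfun hgen)

/-- IKt2 proves ◊(A∨B) → ◊A ∨ ◊B, with ∨ the second-order encoding
A∨B := ∀X((A→X)→(B→X)→X) and ◊A := ∀X(□(A→■X)→X). -/
theorem dia_disj (A B : Fm) :
    IKt2 ((Fm.dia (A.disj B)).imp ((Fm.dia A).disj (Fm.dia B))) := by
  set Q : Fm := (Fm.dia A).disj (Fm.dia B) with hQ
  -- ⊢ A → ■Q
  have hA : Prov false (A.imp (Fm.bbox Q)) :=
    Prov.trans' (Prov.axTenseBboxDia false A) (Prov.bboxMono (disj_inl _ _))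
  -- ⊢ B → ■Q
  have hB : Prov false (B.imp (Fm.bbox Q)) :=
    Prov.trans' (Prov.axTenseBboxDia false B) (Prov.bboxMono (disj_inr _ _))
  -- ⊢ (A ∨ B) → ■Q, by instantiating the disjunction at ■Q
  have helim : Prov false ((A.disj B).imp
      ((A.imp (Fm.bbox Q)).imp ((B.imp (Fm.bbox Q)).imp (Fm.bbox Q)))) := by
    have h := Prov.axC (A := Fm.imp (.imp (A.lift 0) (.var 0))
      (.imp (.imp (B.lift 0) (.var 0)) (.var 0))) false (Fm.bbox Q)
    rwa [inst_disjBody] at h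
  have hdisj : Prov false ((A.disj B).imp (Fm.bbox Q)) :=
    Prov.mpc (Prov.mpc helim hA) hB
  have hbox : Prov false (Fm.box ((A.disj B).imp (Fm.bbox Q))) := Prov.necBox hdisj
  -- instantiate ◊(A∨B) at Q
  have hdia : Prov false ((Fm.dia (A.disj B)).imp
      ((Fm.box ((A.disj B).imp (Fm.bbox Q))).imp Q)) := by
    have h := Prov.axC (A := Fm.imp (.box (.imp ((A.disj B).lift 0) (.bbox (.var 0))))
      (.var 0)) false Q
    rwa [inst_diaBody] at h
  exact Prov.mpc hdia hbox

end SOTense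
end

section
/- IKt2 proves (□A ∧ ◊B) → ◊(A ∧ B), where ∧ is the second-order encoding A∧B := ∀X((A→B→X)→X) and ◊A := ∀X(□(A→■X)→X). -/
namespace SOTense

namespace Fm

theorem subst_lift (A : Fm) : ∀ (k : ℕ) (C : Fm), (A.lift k).subst k C = A := by
  induction A with
  | pr p => intro k C; simp [lift, subst]
  | var n =>
    intro k C
    by_cases h : n < k
    · simp [lift, subst, h]
    · simp only [lift, subst, h, if_false]
      have h1 : ¬ n + 1 < k := by omega
      have h2 : ¬ n + 1 = k := by omega
      simp [h1, h2]
  | imp A B ihA ihB => intro k C; simp [lift, subst, ihA, ihB]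
  | box A ih => intro k C; simp [lift, subst, ih]
  | bbox A ih => intro k C; simp [lift, subst, ih]
  | all A ih => intro k C; simp [lift, subst, ih]

theorem occursPr_lift (P : ℕ) (A : Fm) : ∀ c, (A.lift c).occursPr P ↔ A.occursPr P := by
  induction A with
  | pr p => intro c; simp [lift, occursPr]
  | var n => intro c; by_cases h : n < c <;> simp [lift, occursPr, h]
  | imp A B ihA ihB => intro c; simp [lift, occursPr, ihA, ihB]
  | box A ih => intro c; simp [lift, occursPr, ih]
  | bbox A ih => intro c; simp [lift, occursPr, ih]
  | all A ih => intro c; simp [lift, occursPr, ih]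

/-- A strict bound for propositional symbols occurring in a formula. -/
def bound : Fm → ℕ
  | pr p => p + 1
  | var _ => 0
  | imp A B => max A.bound B.bound
  | box A => A.bound
  | bbox A => A.bound
  | all A => A.bound

theorem not_occursPr_of_bound_le (A : Fm) : ∀ P, A.bound ≤ P → ¬ A.occursPr P := by
  induction A with
  | pr p => intro P h; simp [bound] at h; simp [occursPr]; omega
  | var n => intro P h; simp [occursPr]
  | imp A B ihA ihB =>
    intro P h; simp [bound] at h; simp [occursPr]
    exact ⟨ihA P h.1, ihB P h.2⟩
  | box A ih => intro P h; exact ih P h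
  | bbox A ih => intro P h; exact ih P h
  | all A ih => intro P h; exact ih P h

end Fm

section Rules
open Fm
variable {cl : Bool} {A B C X Y Z W : Fm}

theorem thenK (h : Prov cl B) : Prov cl (A.imp B) :=
  (Prov.axK cl B A).mp h

theorem imp_refl (A : Fm) : Prov cl (A.imp A) :=
  ((Prov.axS cl A (A.imp A) A).mp (Prov.axK cl A (A.imp A))).mp (Prov.axK cl A A)

theorem impTrans (h1 : Prov cl (A.imp B)) (h2 : Prov cl (B.imp C)) : Prov cl (A.imp C) :=
  ((Prov.axS cl A B C).mp (thenK h2)).mp h1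

theorem impSwap (h : Prov cl (A.imp (B.imp C))) : Prov cl (B.imp (A.imp C)) :=
  impTrans (Prov.axK cl B A) ((Prov.axS cl A B C).mp h)

/-- The B combinator as a theorem. -/
theorem axBthm : Prov cl ((B.imp C).imp ((A.imp B).imp (A.imp C))) :=
  impTrans (Prov.axK cl (B.imp C) A) (Prov.axS cl A B C)

/-- The C (flip) combinator as a theorem. -/
theorem axCthm : Prov cl ((X.imp (Y.imp Z)).imp (Y.imp (X.imp Z))) :=
  impSwap (impTrans (Prov.axK cl Y X) (impSwap (Prov.axS cl X Y Z)))

theorem swapUnder (h : Prov cl (X.imp (Y.imp (Z.imp W)))) :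
    Prov cl (X.imp (Z.imp (Y.imp W))) :=
  impTrans h axCthm

theorem sUnder (h : Prov cl (X.imp (Y.imp Z))) (g : Prov cl (X.imp Y)) :
    Prov cl (X.imp Z) :=
  ((Prov.axS cl X Y Z).mp h).mp g

theorem imp_all_intro {C D : Fm} {P : ℕ}
    (h : Prov cl (C.imp (D.inst (pr P))))
    (hf : ¬ (Fm.all ((C.lift 0).imp D)).occursPr P) :
    Prov cl (C.imp (Fm.all D)) := by
  have g : Prov cl (Fm.all ((C.lift 0).imp D)) := by
    refine Prov.gen ?_ hf
    simpa [Fm.inst, Fm.subst, Fm.subst_lift] using h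
  exact impTrans (Prov.axV cl C) ((Prov.axAllFun cl (C.lift 0) D).mp g)

theorem imp2_all_intro {C₁ C₂ D : Fm} {P : ℕ}
    (h : Prov cl (C₁.imp (C₂.imp (D.inst (pr P)))))
    (hf : ¬ (Fm.all ((C₁.lift 0).imp ((C₂.lift 0).imp D))).occursPr P) :
    Prov cl (C₁.imp (C₂.imp (Fm.all D))) := by
  have g : Prov cl (Fm.all ((C₁.lift 0).imp ((C₂.lift 0).imp D))) := by
    refine Prov.gen ?_ hf
    simpa [Fm.inst, Fm.subst, Fm.subst_lift] using h
  have t : Prov cl (C₁.imp ((Fm.all (C₂.lift 0)).imp (Fm.all D))) :=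
    impTrans (Prov.axV cl C₁)
      (impTrans ((Prov.axAllFun cl (C₁.lift 0) ((C₂.lift 0).imp D)).mp g)
        (Prov.axAllFun cl (C₂.lift 0) D))
  exact impSwap (impTrans (Prov.axV cl C₂) (impSwap t))

/-- Pairing: A → B → A∧B. -/
theorem pairI (A B : Fm) : Prov cl (A.imp (B.imp (A.conj B))) := by
  set Q := max A.bound B.bound with hQ
  have inner : Prov cl (A.imp (B.imp ((A.imp (B.imp (pr Q))).imp (pr Q)))) :=
    swapUnder (impSwap (imp_refl (A.imp (B.imp (pr Q)))))
  refine imp2_all_intro (P := Q)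
    (D := ((A.lift 0).imp ((B.lift 0).imp (var 0))).imp (var 0)) ?_ ?_
  · simpa [Fm.inst, Fm.subst, Fm.subst_lift] using inner
  · simp only [Fm.occursPr, Fm.occursPr_lift]
    have hA := A.not_occursPr_of_bound_le Q (le_max_left _ _)
    have hB := B.not_occursPr_of_bound_le Q (le_max_right _ _)
    tauto

end Rules

/-- IKt2 proves (□A ∧ ◊B) → ◊(A ∧ B), with ∧ the second-order encoding
A∧B := ∀X((A→B→X)→X) and ◊A := ∀X(□(A→■X)→X). -/
theorem box_conj_dia (A B : Fm) :
    IKt2 (((Fm.box A).conj (Fm.dia B)).imp (Fm.dia (A.conj B))) := by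
  show Prov false _
  let P := max A.bound B.bound
  let bA := Fm.box A
  let dB := Fm.dia B
  let C := A.conj B
  let W := Fm.bbox (Fm.pr P)
  -- projections of the conjunction
  have t1' : Prov false ((bA.conj dB).imp ((bA.imp (dB.imp bA)).imp bA)) := by
    simpa [Fm.conj, Fm.inst, Fm.subst, Fm.subst_lift] using
      Prov.axC false (((bA.lift 0).imp ((dB.lift 0).imp (Fm.var 0))).imp (Fm.var 0)) bA
  have t1 : Prov false ((bA.conj dB).imp bA) :=
    (impSwap t1').mp (Prov.axK false bA dB)
  have t2' : Prov false ((bA.conj dB).imp ((bA.imp (dB.imp dB)).imp dB)) := by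
    simpa [Fm.conj, Fm.inst, Fm.subst, Fm.subst_lift] using
      Prov.axC false (((bA.lift 0).imp ((dB.lift 0).imp (Fm.var 0))).imp (Fm.var 0)) dB
  have t2 : Prov false ((bA.conj dB).imp dB) :=
    (impSwap t2').mp (thenK (imp_refl dB))
  -- instantiating the diamond
  have t4 : Prov false (dB.imp ((Fm.box (B.imp W)).imp (Fm.pr P))) := by
    simpa [dB, W, Fm.dia, Fm.inst, Fm.subst, Fm.subst_lift] using
      Prov.axC false ((Fm.box ((B.lift 0).imp (Fm.bbox (Fm.var 0)))).imp (Fm.var 0)) (Fm.pr P)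
  -- pushing the pairing under the box
  have t3prop : Prov false (A.imp ((C.imp W).imp (B.imp W))) :=
    impTrans (pairI A B) (impSwap axBthm)
  have t3 : Prov false (bA.imp ((Fm.box (C.imp W)).imp (Fm.box (B.imp W)))) :=
    impTrans ((Prov.axBoxFun false A ((C.imp W).imp (B.imp W))).mp (Prov.necBox t3prop))
      (Prov.axBoxFun false (C.imp W) (B.imp W))
  have a : Prov false ((bA.conj dB).imp ((Fm.box (C.imp W)).imp (Fm.box (B.imp W)))) :=
    impTrans t1 t3
  have b : Prov false ((bA.conj dB).imp ((Fm.box (B.imp W)).imp (Fm.pr P))) :=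
    impTrans t2 t4
  have h5 : Prov false ((bA.conj dB).imp ((Fm.box (C.imp W)).imp (Fm.pr P))) :=
    sUnder (impTrans b axBthm) a
  refine imp_all_intro (P := P)
    (D := (Fm.box ((C.lift 0).imp (Fm.bbox (Fm.var 0)))).imp (Fm.var 0)) ?_ ?_
  · simpa [Fm.inst, Fm.subst, Fm.subst_lift] using h5
  · simp only [C, Fm.occursPr, Fm.occursPr_lift, Fm.conj, Fm.dia, Fm.lift, Fm.box, Nat.lt_add_one, ↓reduceIte]
    have hA := A.not_occursPr_of_bound_le P (le_max_left _ _)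
    have hB := B.not_occursPr_of_bound_le P (le_max_right _ _)
    tauto


end SOTense
end
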